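/- arXiv:1809.00458 — 2 statements merged into one kernel-verified Lean document; each statement's English description precedes it below -/
import Mathlib

section
/- The variance of the KMV intersection estimator, Var(k) = D∩·(k·D∪ − k² − D∪ + k + D∩)/(k·(k−2)), is strictly decreasing in k for k > 2, provided 0 < D∩ ≤ D∪ and k < D∪. -/
theorem kmv_variance_strict_anti (Dcap Dcup : ℝ)
    (h0 : 0 < Dcap) (h1 : Dcap ≤ Dcup) :
    StrictAntiOn
      (fun k : ℝ => Dcap * (k * Dcup - k ^ 2 - Dcup + k + Dcap) / (k * (k - 2)))
      (Set.Ioo 2 Dcup) := by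
  intro a ha b hb hab
  obtain ⟨ha2, haD⟩ := ha
  obtain ⟨hb2, hbD⟩ := hb
  have hapos : 0 < a * (a - 2) := by nlinarith
  have hbpos : 0 < b * (b - 2) := by nlinarith
  simp only
  rw [div_lt_div_iff₀ hbpos hapos]
  have key : 0 < (Dcap - Dcup) * (a + b - 2) + (Dcup - 1) * (a * b) := by
    nlinarith [mul_pos h0 (by nlinarith : (0:ℝ) < a + b - 2),
      mul_pos (sub_pos.mpr hbD) (by nlinarith : (0:ℝ) < (a-1)*(b-1)+1),
      mul_pos (mul_pos (by linarith : (0:ℝ) < b) (by linarith : (0:ℝ) < b-2)) (by linarith : (0:ℝ) < a-1)]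
  nlinarith [mul_pos (mul_pos h0 (sub_pos.mpr hab)) key]
end

section
/- Optimal KMV resource allocation: given m positive integers k₁,...,k_m with sum b, and assuming the query index is drawn uniformly from {1,...,m}, the quantity T = (1/m)·Σ_q Σ_i min(k_q, k_i) is maximized over all such allocations when all k_i are equal (k_i = b/m, assuming m divides b). More precisely, for any allocation, Σ_q Σ_i min(k_q, k_i) ≤ m·b, with equality iff all k_i are equal. -/
/-!
Each row sum `∑ i, min (k q) (k i)` is at most `∑ i, k i`, with equality exactly when `k q` is a
maximum of `k`. Summing over `q`, the total is at most `m • ∑ i, k i`, with equality exactly when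
every value is a maximum, i.e. when `k` is constant.
-/

open Finset

section SumMin

variable {ι M : Type*} [Fintype ι] [AddCommMonoid M] [LinearOrder M] [IsOrderedCancelAddMonoid M]

theorem sum_min_le_sum (f : ι → M) (q : ι) : ∑ i, min (f q) (f i) ≤ ∑ i, f i :=
  sum_le_sum fun _ _ => min_le_right _ _

theorem sum_min_eq_sum_iff (f : ι → M) (q : ι) :
    ∑ i, min (f q) (f i) = ∑ i, f i ↔ ∀ i, f i ≤ f q := by
  rw [sum_eq_sum_iff_of_le fun _ _ => min_le_right _ _]
  simp only [mem_univ, true_implies, min_eq_right_iff]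

theorem sum_sum_min_le (f : ι → M) :
    ∑ q, ∑ i, min (f q) (f i) ≤ Fintype.card ι • ∑ i, f i := by
  rw [← card_univ, ← sum_const]
  exact sum_le_sum fun q _ => sum_min_le_sum f q

theorem sum_sum_min_eq_iff (f : ι → M) :
    ∑ q, ∑ i, min (f q) (f i) = Fintype.card ι • ∑ i, f i ↔ ∀ i j, f i = f j := by
  rw [← card_univ, ← sum_const, sum_eq_sum_iff_of_le fun q _ => sum_min_le_sum f q]
  simp only [mem_univ, true_implies, sum_min_eq_sum_iff]
  exact ⟨fun h i j => le_antisymm (h j i) (h i j), fun h q i => (h i q).le⟩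

end SumMin

theorem optimal_kmv_allocation_general (m b : ℕ)
    (k : Fin m → ℕ) (hsum : ∑ i, k i = b) :
    (∑ q : Fin m, ∑ i : Fin m, min (k q) (k i)) ≤ m * b ∧
    ((∑ q : Fin m, ∑ i : Fin m, min (k q) (k i)) = m * b ↔ ∀ i j, k i = k j) := by
  have h := sum_sum_min_le k
  have h' := sum_sum_min_eq_iff k
  rw [hsum, Fintype.card_fin, smul_eq_mul] at h h'
  exact ⟨h, h'⟩

theorem optimal_kmv_allocation (m b : ℕ) (hm : 0 < m) (hb : 0 < b) (hdvd : m ∣ b)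
    (k : Fin m → ℕ) (hpos : ∀ i, 0 < k i) (hsum : ∑ i, k i = b) :
    (∑ q : Fin m, ∑ i : Fin m, min (k q) (k i)) ≤ m * b ∧
    ((∑ q : Fin m, ∑ i : Fin m, min (k q) (k i)) = m * b ↔ ∀ i j, k i = k j) :=
  optimal_kmv_allocation_general m b k hsum
end
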